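/- Total variation bound for the composed trigger-quantizer mechanism: let M(y) output Q(y) with probability p(y) and output ∅ with probability 1 - p(y), where p is K_1-Lipschitz in y and q ↦ P(Q(y)=q) is (1/d)-Lipschitz in y for each fixed output q (in the sense |P(Q(y)=q) - P(Q(y')=q)| ≤ |y-y'|/d whenever both are positive). Then for any observation event O, |P(M(y) ∈ O) - P(M(y') ∈ O)| ≤ (K_1 + 1/d)|y - y'|. -/

import Mathlib

/-! The `none` output changes by exactly `|p y - p y'|`. For an output `some q` write
`p y P_y(q) - p y' P_{y'}(q) = p y (P_y(q) - P_{y'}(q)) + (p y - p y') P_{y'}(q)`; since both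
`p y` and `P_{y'}(q)` lie in `[0, 1]`, the two terms contribute at most `|y - y'| / d` and
`K₁ |y - y'|`. -/

section

variable {R : Type*} [Ring R] [LinearOrder R] [IsOrderedRing R]

theorem abs_mul_sub_mul_le (a a' b b' : R) :
    |a * b - a' * b'| ≤ |a| * |b - b'| + |a - a'| * |b'| :=
  calc |a * b - a' * b'| = |a * (b - b') + (a - a') * b'| := by congr 1; noncomm_ring
    _ ≤ |a * (b - b')| + |(a - a') * b'| := abs_add_le _ _
    _ = |a| * |b - b'| + |a - a'| * |b'| := by rw [abs_mul, abs_mul]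

theorem abs_mul_sub_mul_le_of_abs_le_one {a a' b b' : R} (ha : |a| ≤ 1) (hb' : |b'| ≤ 1) :
    |a * b - a' * b'| ≤ |b - b'| + |a - a'| :=
  calc |a * b - a' * b'| ≤ |a| * |b - b'| + |a - a'| * |b'| := abs_mul_sub_mul_le a a' b b'
    _ ≤ 1 * |b - b'| + |a - a'| * 1 := by gcongr
    _ = |b - b'| + |a - a'| := by rw [one_mul, mul_one]

theorem abs_le_one_of_mem_Icc {a : R} (h : a ∈ Set.Icc (0 : R) 1) : |a| ≤ 1 :=
  (abs_of_nonneg h.1).trans_le h.2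

end

theorem mechanism_total_variation_bound (d K₁ : ℝ) (hd : 0 < d)
    (p : ℝ → ℝ) (P : ℝ → ℝ → ℝ) (y y' : ℝ)
    (hp01 : ∀ t, p t ∈ Set.Icc (0 : ℝ) 1)
    (hP01 : ∀ t q, P t q ∈ Set.Icc (0 : ℝ) 1)
    (hplip : |p y - p y'| ≤ K₁ * |y - y'|)
    (hPlip : ∀ q, |P y q - P y' q| ≤ |y - y'| / d)
    (PM : ℝ → Option ℝ → ℝ)
    (hPM : ∀ t o, PM t o = match o with
      | none => 1 - p t
      | some q => p t * P t q) :
    ∀ o : Option ℝ, |PM y o - PM y' o| ≤ (K₁ + 1 / d) * |y - y'| := by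
  have hquant_nonneg : 0 ≤ 1 / d * |y - y'| := by positivity
  rintro (_ | q)
  · calc |PM y none - PM y' none| = |p y - p y'| := by
          rw [hPM, hPM, ← abs_neg]; congr 1; ring
      _ ≤ (K₁ + 1 / d) * |y - y'| := by linarith
  · calc |PM y (some q) - PM y' (some q)| = |p y * P y q - p y' * P y' q| := by rw [hPM, hPM]
      _ ≤ |P y q - P y' q| + |p y - p y'| :=
          abs_mul_sub_mul_le_of_abs_le_one (abs_le_one_of_mem_Icc (hp01 y))
            (abs_le_one_of_mem_Icc (hP01 y' q))
      _ ≤ |y - y'| / d + K₁ * |y - y'| := add_le_add (hPlip q) hplip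
      _ = (K₁ + 1 / d) * |y - y'| := by ring
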